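/- arXiv:1912.05054 — 2 statements merged into one kernel-verified Lean document; each statement's English description precedes it below -/
import Mathlib

section
/- Let P be a finite polytopal complex and f : |P| → ℝ a generic PL function (linear on each cell, injective on vertices). If the preimage f⁻¹[a,b] contains no vertex of P, then the sublevel set f_a = {x : f(x) ≤ a} is a strong deformation retract of the sublevel set f_b = {x : f(x) ≤ b}. -/
/-!
Order the cells by the number of cells they strictly contain, and sweep through them in this
order, building a retraction `r` of `f_b` onto `f_a` that never moves a point out of a cell
containing it. On a cell `C` the map is already defined on the swept part of `C ∩ f_b`, which
contains its boundary, and it has to be extended to `C ∩ f_b` with values in `C ∩ f_a`. This is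
Tietze's theorem: `C ∩ f_a` is a retract of a finite-dimensional space, being closed and convex,
and it is nonempty because the minimum of `f` on `C` is attained at a vertex, which lies below
`a`. The straight-line homotopy from the identity to `r` then stays in `f_b`, since `f_b` is
convex within each cell.
-/

open Set

/-- A finite polytopal complex in a real normed space: a finite collection of
(nonempty, compact) convex polytopes, closed under passing to (exposed) faces, such
that any two cells meet in a common face. -/
structure PolytopalComplex (E : Type) [NormedAddCommGroup E] [NormedSpace ℝ E] where
  cells : Set (Set E)
  finite : cells.Finite
  nonempty_cell : ∀ C ∈ cells, C.Nonempty
  polytope : ∀ C ∈ cells, ∃ s : Finset E, C = convexHull ℝ (s : Set E)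
  face_mem : ∀ C ∈ cells, ∀ F : Set E, IsExposed ℝ C F → F.Nonempty → F ∈ cells
  inter_face : ∀ C ∈ cells, ∀ D ∈ cells, (C ∩ D).Nonempty → IsExposed ℝ C (C ∩ D)

namespace PolytopalComplex

variable {E : Type} [NormedAddCommGroup E] [NormedSpace ℝ E]

/-- The underlying space of the complex. -/
def space (P : PolytopalComplex E) : Set E := ⋃ C ∈ P.cells, C

/-- The vertices: the zero-dimensional cells. -/
def vertices (P : PolytopalComplex E) : Set E := {v | {v} ∈ P.cells}

/-- A function is generic PL on `P` if it is affine on each cell and assigns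
distinct values to distinct vertices. -/
structure IsGenericPL (P : PolytopalComplex E) (f : E → ℝ) : Prop where
  affineOn : ∀ C ∈ P.cells, ∀ x ∈ C, ∀ y ∈ C, ∀ t ∈ Icc (0 : ℝ) 1,
    f (t • x + (1 - t) • y) = t * f x + (1 - t) * f y
  injOn : Set.InjOn f P.vertices

/-- The sublevel set `f_a` of `f` in the space of `P`. -/
def sublevel (P : PolytopalComplex E) (f : E → ℝ) (a : ℝ) : Set E :=
  {x ∈ P.space | f x ≤ a}

end PolytopalComplex

section AffineOn

variable {E : Type*} [AddCommGroup E] [Module ℝ E]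

def IsAffineOn (f : E → ℝ) (C : Set E) : Prop :=
  ∀ x ∈ C, ∀ y ∈ C, ∀ t ∈ Icc (0 : ℝ) 1, f (t • x + (1 - t) • y) = t * f x + (1 - t) * f y

variable {f : E → ℝ} {C : Set E}

theorem IsAffineOn.apply_smul_add_smul (hf : IsAffineOn f C) {x y : E} (hx : x ∈ C) (hy : y ∈ C)
    {a b : ℝ} (ha : 0 ≤ a) (hb : 0 ≤ b) (hab : a + b = 1) :
    f (a • x + b • y) = a * f x + b * f y := by
  obtain rfl : b = 1 - a := by linarith
  exact hf x hx y hy a ⟨ha, by linarith⟩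

theorem IsAffineOn.convexOn (hC : Convex ℝ C) (hf : IsAffineOn f C) : ConvexOn ℝ C f :=
  ⟨hC, fun _ hx _ hy _ _ ha hb hab => (hf.apply_smul_add_smul hx hy ha hb hab).le⟩

theorem IsAffineOn.concaveOn (hC : Convex ℝ C) (hf : IsAffineOn f C) : ConcaveOn ℝ C f :=
  ⟨hC, fun _ hx _ hy _ _ ha hb hab => (hf.apply_smul_add_smul hx hy ha hb hab).ge⟩

theorem IsAffineOn.convex_graph (hC : Convex ℝ C) (hf : IsAffineOn f C) :
    Convex ℝ {p : E × ℝ | p.1 ∈ C ∧ f p.1 = p.2} := by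
  rintro ⟨x, _⟩ ⟨hx, hu : f x = _⟩ ⟨y, _⟩ ⟨hy, hv : f y = _⟩ a b ha hb hab
  subst hu hv
  exact ⟨hC hx hy ha hb hab, hf.apply_smul_add_smul hx hy ha hb hab⟩

end AffineOn

section Polytope

variable {E : Type*} [NormedAddCommGroup E] [NormedSpace ℝ E] {f : E → ℝ} {s : Set E}

/-- The graph of `f` over `convexHull ℝ s` is the convex hull of the graph over `s`, hence
compact; continuity follows by projecting its closed slices. -/
theorem IsAffineOn.continuousOn_convexHull (hs : s.Finite)
    (hf : IsAffineOn f (convexHull ℝ s)) : ContinuousOn f (convexHull ℝ s) := by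
  set Γ := convexHull ℝ ((fun x => (x, f x)) '' s)
  have hΓ : Γ ⊆ {p : E × ℝ | p.1 ∈ convexHull ℝ s ∧ f p.1 = p.2} :=
    convexHull_min (by rintro _ ⟨x, hx, rfl⟩; exact ⟨subset_convexHull ℝ s hx, rfl⟩)
      (hf.convex_graph (convex_convexHull ℝ s))
  have hfst : Prod.fst '' Γ = convexHull ℝ s := by
    rw [← LinearMap.coe_fst (R := ℝ) (M₂ := ℝ), LinearMap.image_convexHull, ← image_comp]
    simp [Function.comp_def]
  have hgraph : ∀ x ∈ convexHull ℝ s, (x, f x) ∈ Γ := by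
    intro x hx
    rw [← hfst] at hx
    obtain ⟨p, hp, rfl⟩ := hx
    rwa [(hΓ hp).2]
  rw [continuousOn_iff_isClosed]
  intro K hK
  refine ⟨Prod.fst '' (Γ ∩ Prod.snd ⁻¹' K), ?_, ?_⟩
  · exact (((hs.image _).isCompact_convexHull ℝ).inter_right
      (hK.preimage continuous_snd)).image continuous_fst |>.isClosed
  · ext x
    constructor
    · rintro ⟨hxK, hx⟩
      exact ⟨⟨(x, f x), ⟨hgraph x hx, hxK⟩, rfl⟩, hx⟩
    · rintro ⟨⟨p, ⟨hp, hpK⟩, rfl⟩, hx⟩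
      refine ⟨?_, hx⟩
      rw [mem_preimage, (hΓ hp).2]
      exact hpK

theorem Set.Finite.isExposed_singleton_of_mem_extremePoints (hs : s.Finite) {x : E}
    (hx : x ∈ (convexHull ℝ s).extremePoints ℝ) : IsExposed ℝ (convexHull ℝ s) {x} := by
  have hxs : x ∈ s := extremePoints_convexHull_subset hx
  -- `x` is not in the hull of the other points, otherwise it would be one of them
  have hxK : x ∉ convexHull ℝ (s \ {x}) := fun h =>
    (extremePoints_convexHull_subset (inter_extremePoints_subset_extremePoints_of_subset
      (convexHull_mono sdiff_subset) ⟨h, hx⟩)).2 rfl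
  obtain ⟨l, u, hlK, hlx⟩ := geometric_hahn_banach_closed_point (convex_convexHull ℝ _)
    (hs.sdiff.isClosed_convexHull ℝ) hxK
  have hle : ∀ y ∈ convexHull ℝ s, y = x ∨ l y < l x := by
    intro y hy
    rcases (s \ {x}).eq_empty_or_nonempty with h | h
    · rw [← insert_sdiff_self_of_mem hxs, h, insert_empty_eq, convexHull_singleton] at hy
      exact Or.inl hy
    rw [← insert_sdiff_self_of_mem hxs, convexHull_insert h, convexJoin_singleton_left] at hy
    obtain ⟨k, hk, a, b, ha, hb, hab, rfl⟩ := mem_iUnion₂.mp hy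
    rcases hb.eq_or_lt with rfl | hb
    · left
      simp [show a = 1 by linarith]
    · right
      have hk' := mul_lt_mul_of_pos_left ((hlK k hk).trans hlx) hb
      have hx' : a * l x + b * l x = l x := by rw [← add_mul, hab, one_mul]
      simp only [map_add, map_smul, smul_eq_mul]
      linarith
  refine fun _ => ⟨l, ?_⟩
  ext y
  constructor
  · rintro rfl
    exact ⟨hx.1, fun z hz => (hle z hz).elim (fun h => h ▸ le_rfl) le_of_lt⟩
  · rintro ⟨hy, hymax⟩
    exact (hle y hy).resolve_right (hymax x hx.1).not_gt

end Polytope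

theorem Set.Finite.exists_continuousOn_biUnion {X Y ι : Type*} [TopologicalSpace X]
    [TopologicalSpace Y] [Nonempty Y] {I : Set ι} (hI : I.Finite) {s : ι → Set X}
    (hs : ∀ i ∈ I, IsClosed (s i)) {g : ι → X → Y}
    (hg : ∀ i ∈ I, ContinuousOn (g i) (s i))
    (hgg : ∀ i ∈ I, ∀ j ∈ I, EqOn (g i) (g j) (s i ∩ s j)) :
    ∃ G : X → Y, ContinuousOn G (⋃ i ∈ I, s i) ∧ ∀ i ∈ I, EqOn G (g i) (s i) := by
  classical
  let G x := if h : ∃ i ∈ I, x ∈ s i then g h.choose x else Classical.arbitrary Y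
  have hG : ∀ i ∈ I, EqOn G (g i) (s i) := fun i hi x hx => by
    have h : ∃ i ∈ I, x ∈ s i := ⟨i, hi, hx⟩
    simp only [G, dif_pos h]
    exact hgg _ h.choose_spec.1 i hi ⟨h.choose_spec.2, hx⟩
  refine ⟨G, ?_, hG⟩
  have := hI.to_subtype
  rw [biUnion_eq_iUnion]
  exact (locallyFinite_of_finite _).continuousOn_iUnion (fun i => hs i i.2)
    fun i => (hg i i.2).congr (hG i i.2)

open RealInnerProductSpace in
/-- The nearest-point map onto a complete convex set is `1`-Lipschitz. -/
theorem exists_lipschitz_retraction_of_convex {F : Type*} [NormedAddCommGroup F]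
    [InnerProductSpace ℝ F] {K : Set F} (hne : K.Nonempty) (hK : IsComplete K)
    (hconv : Convex ℝ K) :
    ∃ p : F → F, LipschitzWith 1 p ∧ (∀ u, p u ∈ K) ∧ ∀ u ∈ K, p u = u := by
  choose p hpK hp using fun u => exists_norm_eq_iInf_of_complete_convex hne hK hconv u
  have hobtuse : ∀ u, ∀ w ∈ K, ⟪u - p u, w - p u⟫ ≤ 0 := fun u =>
    (norm_eq_iInf_iff_real_inner_le_zero hconv (hpK u)).mp (hp u)
  refine ⟨p, LipschitzWith.of_dist_le_mul fun u v => ?_, hpK, fun u hu => ?_⟩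
  · rw [NNReal.coe_one, one_mul, dist_eq_norm, dist_eq_norm]
    have h₁ := hobtuse u (p v) (hpK v)
    have h₂ := hobtuse v (p u) (hpK u)
    have key : ‖p u - p v‖ ^ 2 ≤ ⟪u - v, p u - p v⟫ := by
      have e₁ : ⟪u - p u, p v - p u⟫ = -⟪u - p u, p u - p v⟫ := by
        rw [← inner_neg_right, neg_sub]
      have e₂ : ⟪u - v, p u - p v⟫ =
          ⟪u - p u, p u - p v⟫ - ⟪v - p v, p u - p v⟫ + ⟪p u - p v, p u - p v⟫ := by
        rw [← inner_sub_left, ← inner_add_left]; congr 1; abel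
      rw [real_inner_self_eq_norm_sq] at e₂
      linarith
    have := key.trans (real_inner_le_norm _ _)
    nlinarith [norm_nonneg (p u - p v), norm_nonneg (u - v)]
  · have h := hobtuse u u hu
    rw [real_inner_self_eq_norm_sq] at h
    exact (sub_eq_zero.mp (norm_eq_zero.mp (by nlinarith [norm_nonneg (u - p u)]))).symm

theorem exists_retraction_of_convex_of_finiteDimensional {F : Type*} [NormedAddCommGroup F]
    [NormedSpace ℝ F] [FiniteDimensional ℝ F] {K : Set F} (hne : K.Nonempty)
    (hK : IsClosed K) (hconv : Convex ℝ K) :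
    ∃ p : F → F, Continuous p ∧ (∀ u, p u ∈ K) ∧ ∀ u ∈ K, p u = u := by
  let e := toEuclidean (E := F)
  obtain ⟨q, hq, hqK, hqfix⟩ := exists_lipschitz_retraction_of_convex (hne.image e)
    (e.toHomeomorph.isClosedMap K hK).isComplete (hconv.linear_image e.toLinearMap)
  refine ⟨e.symm ∘ q ∘ e, e.symm.continuous.comp (hq.continuous.comp e.continuous),
    fun u => ?_, fun u hu => ?_⟩
  · obtain ⟨v, hv, hve⟩ := hqK (e u)
    simpa [← hve] using hv
  · simp [hqfix (e u) (mem_image_of_mem e hu)]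

section Extension

universe u v

variable {E : Type u} [NormedAddCommGroup E] [NormedSpace ℝ E]

theorem tietzeExtension_of_convex_of_subset_submodule (V : Submodule ℝ E)
    [FiniteDimensional ℝ V] {T : Set E} (hTV : T ⊆ V) (hne : T.Nonempty) (hT : IsClosed T)
    (hconv : Convex ℝ T) : TietzeExtension.{v} T := by
  obtain ⟨p, hp, hpT, hpfix⟩ := exists_retraction_of_convex_of_finiteDimensional
    (K := ((↑) : V → E) ⁻¹' T) (by obtain ⟨y, hy⟩ := hne; exact ⟨⟨y, hTV hy⟩, hy⟩)
    (hT.preimage continuous_subtype_val) (hconv.linear_preimage V.subtype)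
  exact .of_retract ⟨fun y => ⟨y, hTV y.2⟩, by fun_prop⟩
    ⟨fun u => ⟨p u, hpT u⟩, by fun_prop⟩
    (by ext y; simp [hpfix ⟨y, hTV y.2⟩ y.2])

theorem exists_continuousOn_extension_mapsTo (V : Submodule ℝ E) [FiniteDimensional ℝ V]
    {T : Set E} (hTV : T ⊆ V) (hne : T.Nonempty) (hT : IsClosed T) (hconv : Convex ℝ T)
    {Q Z : Set E} (hZ : IsClosed Z) (hZQ : Z ⊆ Q) {ψ : E → E} (hψ : ContinuousOn ψ Z)
    (hψT : MapsTo ψ Z T) :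
    ∃ g : E → E, ContinuousOn g Q ∧ EqOn g ψ Z ∧ MapsTo g Q T := by
  have : TietzeExtension.{u} T := tietzeExtension_of_convex_of_subset_submodule V hTV hne hT hconv
  let ψ' : C(((↑) : Q → E) ⁻¹' Z, E) :=
    ⟨fun z => ψ z, hψ.comp_continuous (by fun_prop) fun z => z.2⟩
  obtain ⟨g, hgT, hg⟩ := ψ'.exists_forall_mem_restrict_eq
    (hZ.preimage continuous_subtype_val) (fun z => hψT z.2)
  have hext : ∀ x : Q, Function.extend (↑) g id x = g x :=
    Subtype.val_injective.extend_apply g id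
  refine ⟨Function.extend (↑) g id, ?_, fun x hx => ?_, fun x hx => ?_⟩
  · rw [continuousOn_iff_continuous_domRestrict]
    convert g.continuous
    exact funext hext
  · rw [hext ⟨x, hZQ hx⟩]
    exact congr($hg ⟨⟨x, hZQ hx⟩, hx⟩)
  · rw [hext ⟨x, hx⟩]
    exact hgT _

end Extension

namespace PolytopalComplex

variable {E : Type} [NormedAddCommGroup E] [NormedSpace ℝ E] {P : PolytopalComplex E}
  {f : E → ℝ} {a b : ℝ} {C D : Set E}

theorem convex_of_mem_cells (hC : C ∈ P.cells) : Convex ℝ C := by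
  obtain ⟨s, rfl⟩ := P.polytope C hC
  exact convex_convexHull ℝ _

theorem isClosed_of_mem_cells (hC : C ∈ P.cells) : IsClosed C := by
  obtain ⟨s, rfl⟩ := P.polytope C hC
  exact s.finite_toSet.isClosed_convexHull ℝ

theorem mem_vertices_of_mem_extremePoints (hC : C ∈ P.cells) {v : E}
    (hv : v ∈ C.extremePoints ℝ) : v ∈ P.vertices := by
  obtain ⟨s, rfl⟩ := P.polytope C hC
  exact P.face_mem _ hC {v} (s.finite_toSet.isExposed_singleton_of_mem_extremePoints hv)
    (singleton_nonempty v)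

theorem sublevel_eq_biUnion (c : ℝ) :
    P.sublevel f c = ⋃ C ∈ P.cells, C ∩ f ⁻¹' Iic c := by
  ext x
  simp only [sublevel, space, mem_ofPred_eq, mem_iUnion₂, mem_inter_iff, mem_preimage,
    mem_Iic, exists_prop]
  tauto

namespace IsGenericPL

variable (hf : P.IsGenericPL f)
include hf

theorem isAffineOn (hC : C ∈ P.cells) : IsAffineOn f C := hf.affineOn C hC

theorem convex_inter_preimage_Iic (hC : C ∈ P.cells) (c : ℝ) :
    Convex ℝ (C ∩ f ⁻¹' Iic c) :=
  ((hf.isAffineOn hC).convexOn (convex_of_mem_cells hC)).convex_le c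

theorem isClosed_inter_preimage_Iic (hC : C ∈ P.cells) (c : ℝ) :
    IsClosed (C ∩ f ⁻¹' Iic c) := by
  obtain ⟨s, rfl⟩ := P.polytope C hC
  exact ((hf.isAffineOn hC).continuousOn_convexHull s.finite_toSet).preimage_isClosed_of_isClosed
    (isClosed_of_mem_cells hC) isClosed_Iic

theorem isClosed_sublevel (c : ℝ) : IsClosed (P.sublevel f c) := by
  rw [sublevel_eq_biUnion]
  exact P.finite.isClosed_biUnion fun C hC => hf.isClosed_inter_preimage_Iic hC c

/-- Minimum principle: `f` is minimised on `C` at an extreme point, and those are vertices. -/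
theorem exists_vertex_le (hC : C ∈ P.cells) {x : E} (hx : x ∈ C) :
    ∃ v ∈ P.vertices, v ∈ C ∧ f v ≤ f x := by
  obtain ⟨s, hs⟩ := P.polytope C hC
  have hext : (C.extremePoints ℝ).Finite :=
    s.finite_toSet.subset (hs ▸ extremePoints_convexHull_subset)
  have hCext : convexHull ℝ (C.extremePoints ℝ) = C := by
    rw [← (hext.isClosed_convexHull ℝ).closure_eq, closure_convexHull_extremePoints
      (hs ▸ s.finite_toSet.isCompact_convexHull ℝ) (convex_of_mem_cells hC)]
  obtain ⟨v, hv, hvx⟩ := ((hf.isAffineOn hC).concaveOn (convex_of_mem_cells hC))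
    |>.exists_le_of_mem_convexHull extremePoints_subset (hCext.symm ▸ hx)
  exact ⟨v, mem_vertices_of_mem_extremePoints hC hv, extremePoints_subset hv, hvx⟩

end IsGenericPL

/-- Stands in for the dimension of `C`. -/
noncomputable def rank (P : PolytopalComplex E) (C : Set E) : ℕ :=
  {D ∈ P.cells | D ⊂ C}.ncard

theorem rank_lt_rank (hD : D ∈ P.cells) (hDC : D ⊂ C) : P.rank D < P.rank C :=
  ncard_lt_ncard
    ⟨fun _ hE => ⟨hE.1, hE.2.trans hDC⟩, fun h => ssubset_irrefl D (h ⟨hD, hDC⟩).2⟩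
    (P.finite.subset fun _ hE => hE.1)

theorem rank_lt_ncard_cells (hC : C ∈ P.cells) : P.rank C < P.cells.ncard :=
  ncard_lt_ncard ⟨fun _ hE => hE.1, fun h => ssubset_irrefl C (h hC).2⟩ P.finite

theorem inter_mem_cells_rank_lt (hC : C ∈ P.cells) (hD : D ∈ P.cells) {x : E}
    (hx : x ∈ C ∩ D) (hCD : ¬C ⊆ D) : C ∩ D ∈ P.cells ∧ P.rank (C ∩ D) < P.rank C := by
  have hCD' : C ∩ D ∈ P.cells := P.face_mem C hC _ (P.inter_face C hC D hD ⟨x, hx⟩) ⟨x, hx⟩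
  exact ⟨hCD', rank_lt_rank hCD' ⟨inter_subset_left, fun h => hCD (h.trans inter_subset_right)⟩⟩

def sweep (P : PolytopalComplex E) (f : E → ℝ) (a b : ℝ) (k : ℕ) : Set E :=
  P.sublevel f a ∪ ⋃ C ∈ {C ∈ P.cells | P.rank C < k}, C ∩ f ⁻¹' Iic b

theorem sweep_zero : P.sweep f a b 0 = P.sublevel f a := by
  simp [sweep]

theorem sweep_succ (k : ℕ) : P.sweep f a b (k + 1) =
    P.sweep f a b k ∪ ⋃ C ∈ {C ∈ P.cells | P.rank C = k}, C ∩ f ⁻¹' Iic b := by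
  ext x
  simp only [sweep, mem_union, mem_iUnion₂, exists_prop, Nat.lt_succ_iff_lt_or_eq]
  grind

theorem sublevel_subset_sweep : P.sublevel f b ⊆ P.sweep f a b P.cells.ncard := by
  rintro x ⟨hx, hxb⟩
  obtain ⟨C, hC, hxC⟩ := mem_iUnion₂.mp hx
  exact Or.inr (mem_biUnion ⟨hC, rank_lt_ncard_cells hC⟩ ⟨hxC, hxb⟩)

theorem IsGenericPL.isClosed_sweep (hf : P.IsGenericPL f) (k : ℕ) :
    IsClosed (P.sweep f a b k) :=
  (hf.isClosed_sublevel a).union <| (P.finite.subset fun _ hC => hC.1).isClosed_biUnion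
    fun _ hC => hf.isClosed_inter_preimage_Iic hC.1 b

theorem subset_of_notMem_sweep (hC : C ∈ P.cells) {k : ℕ} (hCk : P.rank C = k) {x : E}
    (hx : x ∈ C ∩ f ⁻¹' Iic b) (hxk : x ∉ P.sweep f a b k) (hD : D ∈ P.cells)
    (hxD : x ∈ D) : C ⊆ D := by
  by_contra hCD
  obtain ⟨hmem, hlt⟩ := inter_mem_cells_rank_lt hC hD ⟨hx.1, hxD⟩ hCD
  exact hxk <| Or.inr <| mem_biUnion ⟨hmem, hCk ▸ hlt⟩ ⟨⟨hx.1, hxD⟩, hx.2⟩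

structure IsCellularRetraction (P : PolytopalComplex E) (f : E → ℝ) (a : ℝ) (Y : Set E)
    (r : E → E) : Prop where
  continuousOn : ContinuousOn r Y
  eqOn : EqOn r id (P.sublevel f a)
  mapsTo : ∀ C ∈ P.cells, MapsTo r (Y ∩ C) (C ∩ f ⁻¹' Iic a)

theorem IsCellularRetraction.mono {Y Y' : Set E} {r : E → E}
    (hr : P.IsCellularRetraction f a Y r) (hY : Y' ⊆ Y) : P.IsCellularRetraction f a Y' r :=
  ⟨hr.continuousOn.mono hY, hr.eqOn, fun C hC => (hr.mapsTo C hC).mono_left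
    (inter_subset_inter_left C hY)⟩

theorem isCellularRetraction_id : P.IsCellularRetraction f a (P.sublevel f a) id :=
  ⟨continuousOn_id, eqOn_refl _ _, fun _ _ _ hx => ⟨hx.2, hx.1.2⟩⟩

namespace IsGenericPL

variable (hf : P.IsGenericPL f) (hno : ∀ v ∈ P.vertices, f v ∉ Icc a b)
include hf hno

/-- The target `C ∩ f_a` is closed, convex, inside the finite-dimensional span of `C`, and
nonempty as soon as `C ∩ f_b` is: it contains the vertex of `C` where `f` is smallest. -/
theorem exists_extension_of_mem_cells (hC : C ∈ P.cells) {Z : Set E} (hZ : IsClosed Z)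
    (hZC : Z ⊆ C ∩ f ⁻¹' Iic b) {r : E → E} (hr : ContinuousOn r Z)
    (hrZ : MapsTo r Z (C ∩ f ⁻¹' Iic a)) :
    ∃ g : E → E, ContinuousOn g (C ∩ f ⁻¹' Iic b) ∧ EqOn g r Z ∧
      MapsTo g (C ∩ f ⁻¹' Iic b) (C ∩ f ⁻¹' Iic a) := by
  rcases (C ∩ f ⁻¹' Iic b).eq_empty_or_nonempty with hempty | ⟨x, hxC, hxb⟩
  · rw [hempty] at hZC ⊢
    exact ⟨r, continuousOn_empty r, fun x hx => (hZC hx).elim, mapsTo_empty r _⟩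
  obtain ⟨v, hv, hvC, hvx⟩ := hf.exists_vertex_le hC hxC
  have hva : f v ≤ a := by
    by_contra h
    exact hno v hv ⟨(not_le.mp h).le, hvx.trans hxb⟩
  obtain ⟨s, rfl⟩ := P.polytope C hC
  exact exists_continuousOn_extension_mapsTo (Submodule.span ℝ (s : Set E))
    (inter_subset_left.trans (convexHull_min Submodule.subset_span (Submodule.convex _)))
    ⟨v, hvC, hva⟩ (hf.isClosed_inter_preimage_Iic hC a) (hf.convex_inter_preimage_Iic hC a)
    hZ hZC hr hrZ

theorem exists_extension_rank_eq {k : ℕ} {r : E → E}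
    (hr : P.IsCellularRetraction f a (P.sweep f a b k) r) :
    ∃ G : E → E, ContinuousOn G (⋃ C ∈ {C ∈ P.cells | P.rank C = k}, C ∩ f ⁻¹' Iic b) ∧
      EqOn G r ((⋃ C ∈ {C ∈ P.cells | P.rank C = k}, C ∩ f ⁻¹' Iic b) ∩ P.sweep f a b k) ∧
      ∀ C ∈ {C ∈ P.cells | P.rank C = k}, MapsTo G (C ∩ f ⁻¹' Iic b) (C ∩ f ⁻¹' Iic a) := by
  set Y := P.sweep f a b k
  set A := {C ∈ P.cells | P.rank C = k}
  choose! g hgc hgr hgmaps using fun C (hC : C ∈ A) =>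
    hf.exists_extension_of_mem_cells hno hC.1
      ((hf.isClosed_inter_preimage_Iic hC.1 b).inter (hf.isClosed_sweep k)) inter_subset_left
      (hr.continuousOn.mono inter_subset_right) fun x hx => hr.mapsTo C hC.1 ⟨hx.2, hx.1.1⟩
  -- two cells of rank `k` can only share points that are already swept
  have hcompat : ∀ C ∈ A, ∀ C' ∈ A,
      EqOn (g C) (g C') ((C ∩ f ⁻¹' Iic b) ∩ (C' ∩ f ⁻¹' Iic b)) := by
    intro C hC C' hC' x ⟨hx, hx'⟩
    by_cases hxY : x ∈ Y
    · rw [hgr C hC ⟨hx, hxY⟩, hgr C' hC' ⟨hx', hxY⟩]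
    · rw [(subset_of_notMem_sweep hC.1 hC.2 hx hxY hC'.1 hx'.1).antisymm
        (subset_of_notMem_sweep hC'.1 hC'.2 hx' hxY hC.1 hx.1)]
  obtain ⟨G, hGc, hGg⟩ := (P.finite.subset fun _ hC => hC.1).exists_continuousOn_biUnion
    (fun C hC => hf.isClosed_inter_preimage_Iic hC.1 b) hgc hcompat
  refine ⟨G, hGc, fun x ⟨hx, hxY⟩ => ?_, fun C hC => (hgmaps C hC).congr (hGg C hC).symm⟩
  obtain ⟨C, hC, hxC⟩ := mem_iUnion₂.mp hx
  rw [hGg C hC hxC, hgr C hC ⟨hxC, hxY⟩]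

theorem exists_isCellularRetraction_sweep_succ {k : ℕ} {r : E → E}
    (hr : P.IsCellularRetraction f a (P.sweep f a b k) r) :
    ∃ g : E → E, P.IsCellularRetraction f a (P.sweep f a b (k + 1)) g := by
  set Y := P.sweep f a b k
  obtain ⟨G, hGc, hGr, hGmaps⟩ := hf.exists_extension_rank_eq hno hr
  classical
  refine ⟨Y.piecewise r G, ?_, fun x hx => ?_, fun D hD x ⟨hx, hxD⟩ => ?_⟩
  · rw [sweep_succ]
    refine (hr.continuousOn.congr (piecewise_eqOn _ _ _)).union_of_isClosed
      (hGc.congr fun x hx => ?_) (hf.isClosed_sweep k)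
      ((P.finite.subset fun _ hC => hC.1).isClosed_biUnion
        fun C hC => hf.isClosed_inter_preimage_Iic hC.1 b)
    by_cases hxY : x ∈ Y
    · rw [piecewise_eq_of_mem _ _ _ hxY, hGr ⟨hx, hxY⟩]
    · exact piecewise_eq_of_notMem _ _ _ hxY
  · exact (piecewise_eq_of_mem Y r G (Or.inl hx)).trans (hr.eqOn hx)
  · by_cases hxY : x ∈ Y
    · rw [piecewise_eq_of_mem _ _ _ hxY]
      exact hr.mapsTo D hD ⟨hxY, hxD⟩
    · rw [sweep_succ] at hx
      obtain ⟨C, hC, hxC⟩ := mem_iUnion₂.mp (hx.resolve_left hxY)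
      rw [piecewise_eq_of_notMem _ _ _ hxY]
      have hGx := hGmaps C hC hxC
      exact ⟨subset_of_notMem_sweep hC.1 hC.2 hxC hxY hD hxD hGx.1, hGx.2⟩

theorem exists_isCellularRetraction_sweep (k : ℕ) :
    ∃ r : E → E, P.IsCellularRetraction f a (P.sweep f a b k) r := by
  induction k with
  | zero => exact ⟨id, by rw [sweep_zero]; exact isCellularRetraction_id⟩
  | succ k ih =>
    obtain ⟨r, hr⟩ := ih
    exact hf.exists_isCellularRetraction_sweep_succ hno hr

theorem exists_isCellularRetraction_sublevel :
    ∃ r : E → E, P.IsCellularRetraction f a (P.sublevel f b) r := by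
  obtain ⟨r, hr⟩ := hf.exists_isCellularRetraction_sweep hno P.cells.ncard
  exact ⟨r, hr.mono sublevel_subset_sweep⟩

end IsGenericPL

theorem IsCellularRetraction.exists_homotopy (hf : P.IsGenericPL f) (hab : a ≤ b) {r : E → E}
    (hr : P.IsCellularRetraction f a (P.sublevel f b) r) :
    ∃ H : C(↥(P.sublevel f b) × ↥unitInterval, ↥(P.sublevel f b)),
      (∀ x, H (x, 0) = x) ∧
      (∀ x, f (H (x, 1) : E) ≤ a) ∧
      (∀ x : ↥(P.sublevel f b), f (x : E) ≤ a → ∀ t, H (x, t) = x) := by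
  have hmem : ∀ (x : ↥(P.sublevel f b)) (t : ↥unitInterval),
      (t : ℝ) • r x + (1 - (t : ℝ)) • (x : E) ∈ P.sublevel f b := by
    rintro ⟨x, hx, hxb⟩ t
    obtain ⟨C, hC, hxC⟩ := mem_iUnion₂.mp hx
    have hrx := hr.mapsTo C hC ⟨⟨hx, hxb⟩, hxC⟩
    have hseg := hf.convex_inter_preimage_Iic hC b ⟨hrx.1, hrx.2.trans hab⟩ ⟨hxC, hxb⟩
      t.2.1 (sub_nonneg.mpr t.2.2) (add_sub_cancel _ _)
    exact ⟨mem_biUnion hC hseg.1, hseg.2⟩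
  have hrc : Continuous fun x : ↥(P.sublevel f b) => r x :=
    hr.continuousOn.comp_continuous continuous_subtype_val Subtype.prop
  have hc : Continuous fun p : ↥(P.sublevel f b) × unitInterval =>
      (p.2 : ℝ) • r p.1 + (1 - (p.2 : ℝ)) • (p.1 : E) := by
    have ht : Continuous fun p : ↥(P.sublevel f b) × unitInterval => (p.2 : ℝ) := by fun_prop
    exact (ht.smul (hrc.comp continuous_fst)).add ((continuous_const.sub ht).smul
      (continuous_subtype_val.comp continuous_fst))
  refine ⟨⟨fun p => ⟨_, hmem p.1 p.2⟩, hc.subtype_mk _⟩, fun x => ?_, fun x => ?_,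
    fun x hx t => ?_⟩
  · ext; simp
  · obtain ⟨C, hC, hxC⟩ := mem_iUnion₂.mp x.2.1
    simpa using (hr.mapsTo C hC ⟨x.2, hxC⟩).2
  · have : r x = x := hr.eqOn ⟨x.2.1, hx⟩
    ext; simp [this, ← add_smul]

end PolytopalComplex

/-- **Lemma (regular interval).** If `f` is a generic PL function on a finite polytopal
complex `P` and `f⁻¹[a,b]` contains no vertex of `P`, then the sublevel set
`f_a` is a strong deformation retract of the sublevel set `f_b`: there is a homotopy
`H` on `f_b` starting at the identity, ending in `f_a`, and fixing `f_a` pointwise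
throughout. -/
theorem sublevel_strong_deformation_retract_of_no_vertex
    {E : Type} [NormedAddCommGroup E] [NormedSpace ℝ E]
    (P : PolytopalComplex E) (f : E → ℝ) (hf : P.IsGenericPL f)
    (a b : ℝ) (hab : a ≤ b)
    (hno : ∀ v ∈ P.vertices, f v ∉ Set.Icc a b) :
    ∃ H : C(↥(P.sublevel f b) × ↥unitInterval, ↥(P.sublevel f b)),
      (∀ x, H (x, 0) = x) ∧
      (∀ x, f (H (x, 1) : E) ≤ a) ∧
      (∀ x : ↥(P.sublevel f b), f (x : E) ≤ a → ∀ t, H (x, t) = x) := by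
  obtain ⟨r, hr⟩ := hf.exists_isCellularRetraction_sublevel hno
  exact hr.exists_homotopy hf hab
end

section
/- The 17-triangle simplicial complex on vertex set {1,…,8} with triangles 124, 234, 346, 136, 126, 256, 235, 135, 127, 147, 278, 457, 578, 238, 138, 158, 456 is a triangulation of the dunce hat, and every one of its triangles contains either vertex 1, or vertex 8, or two vertices with consecutive labels j, j+1; consequently (by Gale's evenness condition) this complex embeds as a subcomplex of the boundary complex of the cyclic 5-polytope C₅(8) with vertices labeled 1,…,8 in natural order. -/
noncomputable section
/-- Unit vectors: the vertices of the standard triangle. -/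
def triVert (i : Fin 3) : Fin 3 → ℝ := fun j => if i = j then 1 else 0

/-- The point at parameter `t` on the directed edge from vertex `i` to vertex `j`
of the standard triangle. -/
def triSeg (i j : Fin 3) (t : ℝ) : Fin 3 → ℝ := (1 - t) • triVert i + t • triVert j

/-- The edge identifications of the dunce hat: the three directed boundary edges
`e₀e₁`, `e₁e₂`, `e₀e₂` are identified with each other (two coherently, one reversed,
realizing the boundary word `x·x·x⁻¹`). -/
def dunceRel (x y : ↥(stdSimplex ℝ (Fin 3))) : Prop :=
  ∃ t ∈ Set.Icc (0 : ℝ) 1,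
    ((x : Fin 3 → ℝ) = triSeg 0 1 t ∧ (y : Fin 3 → ℝ) = triSeg 1 2 t) ∨
    ((x : Fin 3 → ℝ) = triSeg 0 1 t ∧ (y : Fin 3 → ℝ) = triSeg 0 2 t)

/-- The dunce hat: the quotient of a solid triangle identifying all three boundary
edges, two coherently and one with reversed orientation. -/
def DunceHat : Type := Quot dunceRel

instance : TopologicalSpace DunceHat := instTopologicalSpaceQuot

/-- A finite family of faces collapses to a point: a sequence of elementary collapses,
each removing a free face together with the unique face properly containing it. -/
inductive CollapsesToPoint {E : Type} : Set (Finset E) → Prop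
  | point (v : E) : CollapsesToPoint {{v}}
  | step (F : Set (Finset E)) (s t : Finset E) (hs : s ∈ F) (ht : t ∈ F) (hst : s ⊂ t)
      (hfree : ∀ u ∈ F, s ⊂ u → u = t) (hprev : CollapsesToPoint (F \ {s, t})) :
      CollapsesToPoint F
end
open Geometry

/-- The 17 triangles of the 8-vertex dunce hat. -/
def duncehatTriangles : Finset (Finset ℕ) :=
  { {1,2,4}, {2,3,4}, {3,4,6}, {1,3,6}, {1,2,6}, {2,5,6}, {2,3,5}, {1,3,5},
    {1,2,7}, {1,4,7}, {2,7,8}, {4,5,7}, {5,7,8}, {2,3,8}, {1,3,8}, {1,5,8},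
    {4,5,6} }

/-- The geometric realization of the vertex label `n` as a unit vector. -/
def duncehatVertex (n : ℕ) : Fin 9 → ℝ := fun j => if (j : ℕ) = n then 1 else 0

/-- Gale's evenness condition for a subset `S ⊆ {1,…,8}`: `S` spans a facet of the
cyclic polytope `C₅(8)` iff any two elements outside `S` are separated by an even
number of elements of `S`. -/
def GaleEven (S : Finset ℕ) : Prop :=
  ∀ i ∈ Finset.Icc 1 8, ∀ j ∈ Finset.Icc 1 8, i < j → i ∉ S → j ∉ S →
    Even ((S.filter fun k => i < k ∧ k < j).card)

/-!
Subdivide the standard triangle into 17 small triangles on 14 vertices: the corners, the two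
trisection points of each edge and five interior points. Label the corners 1, the trisection
points 2 and 3 in the direction of each edge, and the interior points 4, …, 8, so that every edge
reads 1, 2, 3, 1 and the labelled small triangles are exactly the 17 given ones. The
piecewise-linear map sending each vertex to the unit vector of its label is continuous, maps onto
|K| and identifies the three edges exactly as the dunce hat does. It is injective elsewhere:
labels 4, …, 8 occur once, and two small triangles sharing an interior vertex never carry the same
label on different vertices. A continuous bijection from the compact dunce hat onto |K| is a
homeomorphism.
-/

open Finset Matrix

lemma mem_convexHull_range_iff_exists_stdSimplex {R ι E : Type*} [Field R] [LinearOrder R]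
    [IsStrictOrderedRing R] [Fintype ι] [AddCommGroup E] [Module R E] (f : ι → E) (y : E) :
    y ∈ convexHull R (Set.range f) ↔ ∃ c ∈ stdSimplex R ι, ∑ i, c i • f i = y := by
  classical
  have hf : Set.range f = Fintype.linearCombination R f '' Set.range fun i => Pi.single i 1 := by
    rw [← Set.range_comp]
    congr 1
    funext i
    simp [Fintype.linearCombination_apply_single]
  rw [hf, ← LinearMap.image_convexHull, convexHull_rangle_single_eq_stdSimplex]
  simp [Fintype.linearCombination_apply]

lemma sum_smul_duncehatVertex_apply {V : Type*} [Fintype V] (ℓ : V → Fin 9) (f : V → ℝ)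
    (n : Fin 9) : (∑ v, f v • duncehatVertex (ℓ v)) n = ∑ v, if ℓ v = n then f v else 0 := by
  simp [duncehatVertex, Finset.sum_apply, Fin.val_inj, eq_comm]

lemma eq_of_sum_smul_duncehatVertex_eq {V : Type*} [Fintype V] {ℓ : V → Fin 9} {S : Finset V}
    (hS : Set.InjOn ℓ S) {f g : V → ℝ} (hf : ∀ v ∉ S, f v = 0) (hg : ∀ v ∉ S, g v = 0)
    (h : ∑ v, f v • duncehatVertex (ℓ v) = ∑ v, g v • duncehatVertex (ℓ v)) : f = g := by
  have coord : ∀ f : V → ℝ, (∀ v ∉ S, f v = 0) → ∀ u ∈ S,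
      (∑ v, f v • duncehatVertex (ℓ v)) (ℓ u) = f u := by
    intro f hf u hu
    rw [sum_smul_duncehatVertex_apply, Finset.sum_eq_single u _ (by simp), if_pos rfl]
    intro v _ hvu
    by_cases hv : v ∈ S
    · rw [if_neg fun h => hvu (hS hv hu h)]
    · simp [hf v hv]
  funext u
  by_cases hu : u ∈ S
  · rw [← coord f hf u hu, h, coord g hg u hu]
  · rw [hf u hu, hg u hu]

lemma triSeg_mem_stdSimplex (a b : Fin 3) {t : ℝ} (ht : t ∈ Set.Icc (0 : ℝ) 1) :
    triSeg a b t ∈ stdSimplex ℝ (Fin 3) :=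
  convex_stdSimplex ℝ (Fin 3) (ite_eq_mem_stdSimplex ℝ a) (ite_eq_mem_stdSimplex ℝ b)
    (sub_nonneg.2 ht.2) ht.1 (sub_add_cancel 1 t)

lemma smul_triSeg_add_smul_triSeg (a b : Fin 3) (t₁ t₂ s : ℝ) :
    (1 - s) • triSeg a b t₁ + s • triSeg a b t₂ = triSeg a b ((1 - s) * t₁ + s * t₂) := by
  ext j
  simp only [triSeg, Pi.add_apply, Pi.smul_apply, smul_eq_mul]
  ring

lemma eq_triSeg_of_apply_eq_zero {x : Fin 3 → ℝ} (hx : x ∈ stdSimplex ℝ (Fin 3)) {a b c : Fin 3}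
    (hab : a ≠ b) (hac : a ≠ c) (hbc : b ≠ c) (hc : x c = 0) : x = triSeg a b (x b) := by
  have hsum := hx.2
  rw [Fin.sum_univ_three] at hsum
  ext j
  fin_cases a <;> fin_cases b <;> fin_cases c <;> fin_cases j <;>
    simp_all [triSeg, triVert] <;> linarith

namespace DunceHat

instance : CompactSpace DunceHat := Quot.compactSpace

def edgePoint (t : unitInterval) : DunceHat :=
  Quot.mk _ ⟨triSeg 0 1 t, triSeg_mem_stdSimplex 0 1 t.2⟩

lemma mk_triSeg_eq_edgePoint {a b : Fin 3} (hab : a < b) (t : unitInterval) :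
    Quot.mk dunceRel ⟨triSeg a b t, triSeg_mem_stdSimplex a b t.2⟩ = edgePoint t := by
  fin_cases a <;> fin_cases b <;> simp only [Fin.lt_def] at hab <;> norm_num at hab
  · rfl
  · exact (Quot.sound ⟨t, t.2, Or.inr ⟨rfl, rfl⟩⟩).symm
  · exact (Quot.sound ⟨t, t.2, Or.inl ⟨rfl, rfl⟩⟩).symm

lemma edgePoint_zero_eq_one : edgePoint 0 = edgePoint 1 := by
  rw [← mk_triSeg_eq_edgePoint (by decide : (1 : Fin 3) < 2)]
  exact congrArg _ (Subtype.ext (by ext j; fin_cases j <;> simp [triSeg, triVert]))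

lemma exists_edgePoint_eq {x : Fin 3 → ℝ} (hx : x ∈ stdSimplex ℝ (Fin 3)) {c : Fin 3}
    (hc : x c = 0) : ∃ t, Quot.mk dunceRel ⟨x, hx⟩ = edgePoint t := by
  obtain ⟨a, b, hab, hac, hbc⟩ : ∃ a b : Fin 3, a < b ∧ a ≠ c ∧ b ≠ c := by
    fin_cases c <;> decide
  refine ⟨⟨x b, mem_Icc_of_mem_stdSimplex hx b⟩, ?_⟩
  rw [← mk_triSeg_eq_edgePoint hab]
  exact congrArg _ (Subtype.ext (eq_triSeg_of_apply_eq_zero hx hab.ne hac hbc hc))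

end DunceHat

noncomputable section

namespace DunceTriangulation

-- Barycentric coordinates scaled by 9.
def vertexCoord : Fin 14 → Fin 3 → ℤ :=
  ![![9,0,0], ![0,9,0], ![0,0,9], ![6,3,0], ![3,6,0], ![0,6,3],
    ![0,3,6], ![6,0,3], ![3,0,6], ![4,4,1], ![3,3,3], ![3,5,1], ![5,2,2], ![3,1,5]]

def label : Fin 14 → Fin 9 := ![1,1,1,2,3,2,3,2,3,4,5,6,7,8]

def triangle : Fin 17 → Fin 3 → Fin 14 :=
  ![![0,3,9],![3,4,9],![4,11,9],![4,1,11],![1,5,11],![5,10,11],![5,6,10],![6,2,10],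
    ![7,0,12],![0,9,12],![7,12,13],![9,10,12],![12,10,13],![8,7,13],![2,8,13],
    ![10,2,13],![9,11,10]]

-- Row `k` of `baryCoeff i` is 20 times the `k`-th barycentric coordinate of `triangle i`, as a
-- linear form on the plane `x₀ + x₁ + x₂ = 1`; hence `baryCoeff i` inverts the vertex
-- coordinates of `triangle i` up to the factor `20 * 9 = 180`.
def baryCoeff : Fin 17 → Matrix (Fin 3) (Fin 3) ℤ :=
  ![!![20, -40, 80; 0, 60, -240; 0, 0, 180],
    !![40, -20, -80; -20, 40, -80; 0, 0, 180],
    !![20, 20, -160; -120, 60, 240; 120, -60, -60],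
    !![60, 0, -180; -40, 20, 20; 0, 0, 180],
    !![-20, 20, -40; -20, 0, 60; 60, 0, 0],
    !![-40, 20, 20; 30, -30, 60; 30, 30, -60],
    !![-20, 40, -20; -20, -20, 40; 60, 0, 0],
    !![-60, 60, 0; 20, -40, 20; 60, 0, 0],
    !![0, -60, 60; 20, -10, -40; 0, 90, 0],
    !![20, -10, -40; 0, 60, -60; 0, -30, 120],
    !![32, -76, -4; 12, 84, -24; -24, 12, 48],
    !![0, 60, -60; -40, 20, 80; 60, -60, 0],
    !![60, -30, -30; -40, 95, 5; 0, -45, 45],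
    !![-20, -140, 40; 40, -20, -20; 0, 180, 0],
    !![-40, 20, 20; 60, -180, 0; 0, 180, 0],
    !![-30, 90, 0; -40, 20, 20; 90, -90, 0],
    !![120, -60, -60; -90, 90, 0; -10, -10, 80]]

def vertices (i : Fin 17) : Finset (Fin 14) := univ.image (triangle i)

def star (v : Fin 14) : Finset (Fin 17 × Fin 3) := {p | triangle p.1 p.2 = v}

lemma vertexCoord_nonneg : ∀ v j, 0 ≤ vertexCoord v j := by decide +kernel

lemma sum_vertexCoord : ∀ v, ∑ j, vertexCoord v j = 9 := by decide +kernel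

lemma triangle_injective : ∀ i, Function.Injective (triangle i) := by decide +kernel

lemma baryCoeff_mulVec_vertexCoord_triangle :
    ∀ i k, baryCoeff i *ᵥ vertexCoord (triangle i k) = Pi.single k 180 := by
  decide +kernel

lemma star_nonempty : ∀ v, (star v).Nonempty := by decide +kernel

lemma single_le_baryCoeff_mulVec_of_mem_star : ∀ i k, ∀ p ∈ star (triangle i k), ∀ k',
    (Pi.single k 180 : Fin 3 → ℤ) k' ≤ (baryCoeff p.1 *ᵥ vertexCoord (triangle i k')) p.2 := by
  decide +kernel

lemma exists_mem_star_baryCoeff_mulVec_nonpos : ∀ i, ∀ v ∉ vertices i, ∃ p ∈ star v, ∀ k',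
    (baryCoeff p.1 *ᵥ vertexCoord (triangle i k')) p.2 ≤ 0 := by
  decide +kernel

lemma label_injOn_vertices_union : ∀ i j, ∀ v ∈ vertices i, v ∈ vertices j → 4 ≤ label v →
    Set.InjOn label ↑(vertices i ∪ vertices j) := by
  decide +kernel

lemma eq_of_label_eq : ∀ v w, 4 ≤ label v → label w = label v → w = v := by decide +kernel

lemma exists_vertexCoord_eq_zero : ∀ i, ∃ c, ∀ v ∈ vertices i, label v < 4 →
    vertexCoord v c = 0 := by
  decide +kernel

lemma image_image_label_triangle :
    (univ.image fun i => univ.image fun k => (label (triangle i k) : ℕ)) = duncehatTriangles := by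
  decide +kernel

def vertex (v : Fin 14) : Fin 3 → ℝ := fun j => vertexCoord v j / 9

lemma vertex_mem_stdSimplex (v : Fin 14) : vertex v ∈ stdSimplex ℝ (Fin 3) := by
  refine ⟨fun j => div_nonneg (by exact_mod_cast vertexCoord_nonneg v j) (by norm_num), ?_⟩
  simp only [vertex, ← Finset.sum_div, ← Int.cast_sum, sum_vertexCoord]
  norm_num

def vertexMatrix (i : Fin 17) : Matrix (Fin 3) (Fin 3) ℝ :=
  Matrix.of fun j k => vertex (triangle i k) j

def baryMatrix (i : Fin 17) : Matrix (Fin 3) (Fin 3) ℝ := (20 : ℝ)⁻¹ • (baryCoeff i).map (↑)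

lemma vertexMatrix_mulVec (i : Fin 17) (c : Fin 3 → ℝ) :
    vertexMatrix i *ᵥ c = ∑ k, c k • vertex (triangle i k) := by
  ext j
  simp [vertexMatrix, mulVec, dotProduct, Finset.sum_apply, mul_comm]

lemma vertexMatrix_mem_colStochastic (i : Fin 17) :
    vertexMatrix i ∈ colStochastic ℝ (Fin 3) :=
  mem_colStochastic_iff_sum.2 ⟨fun j _ => (vertex_mem_stdSimplex _).1 j,
    fun _ => (vertex_mem_stdSimplex _).2⟩

lemma vertexMatrix_mulVec_mem_stdSimplex (i : Fin 17) {c : Fin 3 → ℝ}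
    (hc : c ∈ stdSimplex ℝ (Fin 3)) : vertexMatrix i *ᵥ c ∈ stdSimplex ℝ (Fin 3) :=
  ⟨nonneg_mulVec_of_mem_colStochastic (vertexMatrix_mem_colStochastic i) hc.1,
    (sum_mulVec_of_mem_colStochastic (vertexMatrix_mem_colStochastic i)).trans hc.2⟩

lemma baryMatrix_mulVec_apply (i : Fin 17) (x : Fin 3 → ℝ) (k : Fin 3) :
    (baryMatrix i *ᵥ x) k =
      (baryCoeff i k 0 * x 0 + baryCoeff i k 1 * x 1 + baryCoeff i k 2 * x 2) / 20 := by
  simp only [baryMatrix, mulVec, dotProduct, Fin.sum_univ_three, Matrix.smul_apply,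
    Matrix.map_apply, smul_eq_mul]
  ring

lemma baryMatrix_mulVec_vertex (i : Fin 17) (v : Fin 14) :
    baryMatrix i *ᵥ vertex v = fun k => ((baryCoeff i *ᵥ vertexCoord v) k : ℝ) / 180 := by
  ext k
  rw [baryMatrix_mulVec_apply]
  simp only [vertex, mulVec, dotProduct, Fin.sum_univ_three]
  push_cast
  ring

lemma baryMatrix_mul_vertexMatrix (i : Fin 17) : baryMatrix i * vertexMatrix i = 1 := by
  ext k k'
  have h : (baryMatrix i * vertexMatrix i) k k' = (baryMatrix i *ᵥ vertex (triangle i k')) k := by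
    simp [mul_apply, mulVec, dotProduct, vertexMatrix]
  rw [h, baryMatrix_mulVec_vertex, baryCoeff_mulVec_vertexCoord_triangle, one_apply]
  simp only [Pi.single_apply]
  split_ifs <;> simp_all [eq_comm]

lemma vertexMatrix_mulVec_baryMatrix_mulVec (i : Fin 17) (x : Fin 3 → ℝ) :
    vertexMatrix i *ᵥ (baryMatrix i *ᵥ x) = x := by
  rw [mulVec_mulVec, mul_eq_one_comm.1 (baryMatrix_mul_vertexMatrix i), one_mulVec]

lemma baryMatrix_mulVec_vertexMatrix_mulVec (i : Fin 17) (c : Fin 3 → ℝ) :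
    baryMatrix i *ᵥ (vertexMatrix i *ᵥ c) = c := by
  rw [mulVec_mulVec, baryMatrix_mul_vertexMatrix, one_mulVec]

lemma baryMatrix_mulVec_mem_stdSimplex {i : Fin 17} {x : Fin 3 → ℝ}
    (hx : x ∈ stdSimplex ℝ (Fin 3)) (h : ∀ k, 0 ≤ (baryMatrix i *ᵥ x) k) :
    baryMatrix i *ᵥ x ∈ stdSimplex ℝ (Fin 3) := by
  refine ⟨h, ?_⟩
  rw [← sum_mulVec_of_mem_colStochastic (vertexMatrix_mem_colStochastic i),
    vertexMatrix_mulVec_baryMatrix_mulVec]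
  exact hx.2

lemma baryMatrix_mulVec_eq_sum (i j : Fin 17) (x : Fin 3 → ℝ) :
    baryMatrix j *ᵥ x = ∑ k, (baryMatrix i *ᵥ x) k • baryMatrix j *ᵥ vertex (triangle i k) := by
  conv_lhs => rw [← vertexMatrix_mulVec_baryMatrix_mulVec i x, vertexMatrix_mulVec]
  simp [mulVec_sum, mulVec_smul]

-- A decision tree along lines of the subdivision finds a small triangle containing `x`.
lemma exists_baryMatrix_mulVec_mem_stdSimplex {x : Fin 3 → ℝ}
    (hx : x ∈ stdSimplex ℝ (Fin 3)) : ∃ i, baryMatrix i *ᵥ x ∈ stdSimplex ℝ (Fin 3) := by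
  suffices ∃ i, ∀ k, 0 ≤ baryCoeff i k 0 * x 0 + baryCoeff i k 1 * x 1 + baryCoeff i k 2 * x 2 by
    refine this.imp fun i hi => baryMatrix_mulVec_mem_stdSimplex hx fun k => ?_
    rw [baryMatrix_mulVec_apply]
    exact div_nonneg (hi k) (by norm_num)
  have h0 := hx.1 0; have h1 := hx.1 1; have h2 := hx.1 2
  rcases le_total 0 (2 * x 0 - x 1 - 4 * x 2) with h | h
  · rcases le_total 0 (x 1 - 4 * x 2) with h' | h'
    · rcases le_total 0 (x 0 - 2 * x 1 + 4 * x 2) with h'' | h''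
      · refine ⟨0, fun k => ?_⟩; fin_cases k <;> simp [baryCoeff] <;> linarith
      · refine ⟨1, fun k => ?_⟩; fin_cases k <;> simp [baryCoeff] <;> linarith
    · rcases le_total 0 (x 1 - x 2) with h'' | h''
      · refine ⟨9, fun k => ?_⟩; fin_cases k <;> simp [baryCoeff] <;> linarith
      · refine ⟨8, fun k => ?_⟩; fin_cases k <;> simp [baryCoeff] <;> linarith
  rcases le_total 0 (2 * x 0 - x 1 - x 2) with h' | h'
  · rcases le_total 0 (x 0 - x 1) with h'' | h''
    · rcases le_total 0 (x 1 - x 2) with h₃ | h₃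
      · refine ⟨11, fun k => ?_⟩; fin_cases k <;> simp [baryCoeff] <;> linarith
      rcases le_total 0 (-8 * x 0 + 19 * x 1 + x 2) with h₄ | h₄
      · refine ⟨12, fun k => ?_⟩; fin_cases k <;> simp [baryCoeff] <;> linarith
      rcases le_total 0 (x 0 + 7 * x 1 - 2 * x 2) with h₅ | h₅
      · refine ⟨10, fun k => ?_⟩; fin_cases k <;> simp [baryCoeff] <;> linarith
      · refine ⟨13, fun k => ?_⟩; fin_cases k <;> simp [baryCoeff] <;> linarith
    · rcases le_total 0 (x 0 + x 1 - 8 * x 2) with h₃ | h₃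
      · refine ⟨2, fun k => ?_⟩; fin_cases k <;> simp [baryCoeff] <;> linarith
      · refine ⟨16, fun k => ?_⟩; fin_cases k <;> simp [baryCoeff] <;> linarith
  rcases le_total 0 (x 0 + x 1 - 2 * x 2) with h'' | h''
  · rcases le_total 0 (x 0 - 3 * x 2) with h₃ | h₃
    · refine ⟨3, fun k => ?_⟩; fin_cases k <;> simp [baryCoeff] <;> linarith
    rcases le_total 0 (-x 0 + x 1 - 2 * x 2) with h₄ | h₄
    · refine ⟨4, fun k => ?_⟩; fin_cases k <;> simp [baryCoeff] <;> linarith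
    · refine ⟨5, fun k => ?_⟩; fin_cases k <;> simp [baryCoeff] <;> linarith
  rcases le_total 0 (x 0 - x 1) with h₃ | h₃
  · rcases le_total 0 (x 0 - 3 * x 1) with h₄ | h₄
    · refine ⟨14, fun k => ?_⟩; fin_cases k <;> simp [baryCoeff] <;> linarith
    · refine ⟨15, fun k => ?_⟩; fin_cases k <;> simp [baryCoeff] <;> linarith
  rcases le_total 0 (x 0 - 2 * x 1 + x 2) with h₄ | h₄
  · refine ⟨7, fun k => ?_⟩; fin_cases k <;> simp [baryCoeff] <;> linarith
  · refine ⟨6, fun k => ?_⟩; fin_cases k <;> simp [baryCoeff] <;> linarith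

-- The minimum over the star is the barycentric coordinate of `v` on each small triangle of the
-- star (and nonpositive on the others) because every star is convex; see `hat_eq`.
def hat (v : Fin 14) (x : Fin 3 → ℝ) : ℝ :=
  max 0 ((star v).inf' (star_nonempty v) fun p => (baryMatrix p.1 *ᵥ x) p.2)

lemma continuous_hat (v : Fin 14) : Continuous (hat v) :=
  continuous_const.max <| Continuous.finset_inf'_apply _ fun p _ =>
    (continuous_apply p.2).comp (continuous_const.matrix_mulVec continuous_id)

lemma hat_eq {i : Fin 17} {x : Fin 3 → ℝ} (hx : baryMatrix i *ᵥ x ∈ stdSimplex ℝ (Fin 3))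
    (v : Fin 14) : hat v x = ∑ k, if triangle i k = v then (baryMatrix i *ᵥ x) k else 0 := by
  set b := baryMatrix i *ᵥ x
  have hexpand : ∀ p : Fin 17 × Fin 3, (baryMatrix p.1 *ᵥ x) p.2 =
      ∑ k', b k' * ((baryCoeff p.1 *ᵥ vertexCoord (triangle i k')) p.2 : ℝ) / 180 := by
    intro p
    simp [baryMatrix_mulVec_eq_sum i p.1 x, b, Finset.sum_apply, baryMatrix_mulVec_vertex,
      mul_div_assoc]
  by_cases hv : v ∈ vertices i
  · obtain ⟨k, -, rfl⟩ := mem_image.1 hv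
    rw [Finset.sum_eq_single k (fun k' _ hk' => if_neg ((triangle_injective i).ne hk'))
      (by simp), if_pos rfl]
    have hmin : (star (triangle i k)).inf' (star_nonempty _)
        (fun p => (baryMatrix p.1 *ᵥ x) p.2) = b k := by
      refine le_antisymm (Finset.inf'_le_of_le _ (by simp [star] : (i, k) ∈ _) le_rfl) ?_
      refine Finset.le_inf' _ _ fun p hp => ?_
      rw [hexpand]
      calc b k = ∑ k', b k' * ((Pi.single k 180 : Fin 3 → ℤ) k' : ℝ) / 180 := by
            simp [Pi.single_apply, ite_div]
        _ ≤ _ := Finset.sum_le_sum fun k' _ => div_le_div_of_nonneg_right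
          (mul_le_mul_of_nonneg_left (by exact_mod_cast
            single_le_baryCoeff_mulVec_of_mem_star i k p hp k') (hx.1 k')) (by norm_num)
    rw [hat, hmin, max_eq_right (hx.1 k)]
  · rw [Finset.sum_eq_zero fun k _ =>
      if_neg fun h : triangle i k = v => hv (h ▸ mem_image_of_mem _ (mem_univ k)), hat,
      max_eq_left]
    obtain ⟨p, hp, hle⟩ := exists_mem_star_baryCoeff_mulVec_nonpos i v hv
    refine Finset.inf'_le_of_le _ hp ?_
    rw [hexpand]
    exact Finset.sum_nonpos fun k' _ => div_nonpos_of_nonpos_of_nonneg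
      (mul_nonpos_of_nonneg_of_nonpos (hx.1 k') (by exact_mod_cast hle k')) (by norm_num)

lemma hat_eq_zero_of_notMem_vertices {i : Fin 17} {x : Fin 3 → ℝ}
    (hx : baryMatrix i *ᵥ x ∈ stdSimplex ℝ (Fin 3)) {v : Fin 14} (hv : v ∉ vertices i) :
    hat v x = 0 := by
  rw [hat_eq hx]
  exact Finset.sum_eq_zero fun k _ =>
    if_neg fun h : triangle i k = v => hv (h ▸ mem_image_of_mem _ (mem_univ k))

lemma sum_hat_smul {E : Type*} [AddCommMonoid E] [Module ℝ E] {i : Fin 17} {x : Fin 3 → ℝ}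
    (hx : baryMatrix i *ᵥ x ∈ stdSimplex ℝ (Fin 3)) (f : Fin 14 → E) :
    ∑ v, hat v x • f v = ∑ k, (baryMatrix i *ᵥ x) k • f (triangle i k) := by
  simp only [hat_eq hx, Finset.sum_smul, ite_smul, zero_smul]
  rw [Finset.sum_comm]
  simp

lemma sum_hat_smul_vertex {x : Fin 3 → ℝ} (hx : x ∈ stdSimplex ℝ (Fin 3)) :
    ∑ v, hat v x • vertex v = x := by
  obtain ⟨i, hi⟩ := exists_baryMatrix_mulVec_mem_stdSimplex hx
  rw [sum_hat_smul hi, ← vertexMatrix_mulVec, vertexMatrix_mulVec_baryMatrix_mulVec]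

def simplicialMap (x : Fin 3 → ℝ) : Fin 9 → ℝ := ∑ v, hat v x • duncehatVertex (label v)

lemma continuous_simplicialMap : Continuous simplicialMap :=
  continuous_finsetSum _ fun v _ => (continuous_hat v).smul continuous_const

lemma simplicialMap_vertexMatrix_mulVec (i : Fin 17) {c : Fin 3 → ℝ}
    (hc : c ∈ stdSimplex ℝ (Fin 3)) :
    simplicialMap (vertexMatrix i *ᵥ c) = ∑ k, c k • duncehatVertex (label (triangle i k)) := by
  have hbary := baryMatrix_mulVec_vertexMatrix_mulVec i c
  rw [simplicialMap, sum_hat_smul (hbary ▸ hc), hbary]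

lemma image_simplicialMap : simplicialMap '' stdSimplex ℝ (Fin 3) =
    ⋃ i, convexHull ℝ (Set.range fun k => duncehatVertex (label (triangle i k))) := by
  ext w
  simp only [Set.mem_image, Set.mem_iUnion, mem_convexHull_range_iff_exists_stdSimplex]
  constructor
  · rintro ⟨x, hx, rfl⟩
    obtain ⟨i, hi⟩ := exists_baryMatrix_mulVec_mem_stdSimplex hx
    exact ⟨i, _, hi, (sum_hat_smul hi fun v => duncehatVertex (label v)).symm⟩
  · rintro ⟨i, c, hc, rfl⟩
    exact ⟨_, vertexMatrix_mulVec_mem_stdSimplex i hc, simplicialMap_vertexMatrix_mulVec i hc⟩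

lemma space_eq_iUnion {K : SimplicialComplex ℝ (Fin 9 → ℝ)}
    (hK : K.faces = {s : Finset (Fin 9 → ℝ) | s.Nonempty ∧ ∃ T ∈ duncehatTriangles,
      ↑s ⊆ duncehatVertex '' (T : Set ℕ)}) :
    K.space = ⋃ i, convexHull ℝ (Set.range fun k => duncehatVertex (label (triangle i k))) := by
  ext w
  rw [SimplicialComplex.mem_space_iff, hK, Set.mem_iUnion]
  constructor
  · rintro ⟨s, ⟨-, T, hT, hsT⟩, hw⟩
    rw [← image_image_label_triangle] at hT
    obtain ⟨i, -, rfl⟩ := mem_image.1 hT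
    refine ⟨i, convexHull_mono (fun p hp => ?_) hw⟩
    obtain ⟨n, hn, rfl⟩ := hsT hp
    obtain ⟨k, -, rfl⟩ := mem_image.1 (mem_coe.1 hn)
    exact ⟨k, rfl⟩
  · rintro ⟨i, hw⟩
    refine ⟨univ.image fun k => duncehatVertex (label (triangle i k)), ⟨univ_nonempty.image _,
      univ.image fun k => (label (triangle i k) : ℕ), image_image_label_triangle ▸
        mem_image_of_mem _ (mem_univ i), ?_⟩, by simpa using hw⟩
    simp only [coe_image, coe_univ, Set.image_univ]
    rintro _ ⟨k, rfl⟩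
    exact ⟨_, ⟨k, rfl⟩, rfl⟩

lemma simplicialMap_apply_label {v : Fin 14} (hv : 4 ≤ label v) (x : Fin 3 → ℝ) :
    simplicialMap x (label v) = hat v x := by
  rw [simplicialMap, sum_smul_duncehatVertex_apply, Finset.sum_eq_single v _ (by simp),
    if_pos rfl]
  exact fun w _ hwv => if_neg fun h => hwv (eq_of_label_eq v w hv h)

lemma eq_of_simplicialMap_eq_of_hat_ne_zero {x y : Fin 3 → ℝ} (hx : x ∈ stdSimplex ℝ (Fin 3))
    (hy : y ∈ stdSimplex ℝ (Fin 3)) (h : simplicialMap x = simplicialMap y) {v : Fin 14}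
    (hv : 4 ≤ label v) (hxv : hat v x ≠ 0) : x = y := by
  obtain ⟨i, hi⟩ := exists_baryMatrix_mulVec_mem_stdSimplex hx
  obtain ⟨j, hj⟩ := exists_baryMatrix_mulVec_mem_stdSimplex hy
  have hyv : hat v y ≠ 0 := by
    rwa [← simplicialMap_apply_label hv, ← h, simplicialMap_apply_label hv]
  have hhat : (fun u => hat u x) = fun u => hat u y :=
    eq_of_sum_smul_duncehatVertex_eq (label_injOn_vertices_union i j v
        (not_imp_comm.1 (hat_eq_zero_of_notMem_vertices hi) hxv)
        (not_imp_comm.1 (hat_eq_zero_of_notMem_vertices hj) hyv) hv)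
      (fun u hu => hat_eq_zero_of_notMem_vertices hi fun h => hu (mem_union_left _ h))
      (fun u hu => hat_eq_zero_of_notMem_vertices hj fun h => hu (mem_union_right _ h)) h
  rw [← sum_hat_smul_vertex hx, ← sum_hat_smul_vertex hy]
  simp_rw [funext_iff.1 hhat]

lemma exists_apply_eq_zero_of_hat_eq_zero {x : Fin 3 → ℝ} (hx : x ∈ stdSimplex ℝ (Fin 3))
    (h : ∀ v, 4 ≤ label v → hat v x = 0) : ∃ c, x c = 0 := by
  obtain ⟨i, hi⟩ := exists_baryMatrix_mulVec_mem_stdSimplex hx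
  obtain ⟨c, hc⟩ := exists_vertexCoord_eq_zero i
  refine ⟨c, ?_⟩
  rw [← sum_hat_smul_vertex hx, Finset.sum_apply]
  refine Finset.sum_eq_zero fun v _ => ?_
  by_cases hv : 4 ≤ label v
  · simp [h v hv]
  by_cases hvi : v ∈ vertices i
  · simp [vertex, hc v hvi (not_le.1 hv)]
  · simp [hat_eq_zero_of_notMem_vertices hi hvi]

-- The labels met along each edge of the triangle, from its smaller to its larger corner.
def boundaryLabel : Fin 4 → Fin 9 := ![1, 2, 3, 1]

-- `9 • triSeg a b (m / 3)` in integer coordinates.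
def edgeCoord (a b : Fin 3) (m : ℕ) : Fin 3 → ℤ :=
  fun j => (if a = j then 9 - 3 * (m : ℤ) else 0) + (if b = j then 3 * (m : ℤ) else 0)

lemma exists_triangle_edge : ∀ a b : Fin 3, a < b → ∀ m : Fin 3, ∃ i k k',
    vertexCoord (triangle i k) = edgeCoord a b m ∧
      vertexCoord (triangle i k') = edgeCoord a b (m + 1) ∧
      label (triangle i k) = boundaryLabel m.castSucc ∧
      label (triangle i k') = boundaryLabel m.succ := by
  decide +kernel

lemma vertex_eq_triSeg {v : Fin 14} {a b : Fin 3} {m : ℕ}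
    (h : vertexCoord v = edgeCoord a b m) : vertex v = triSeg a b (m / 3) := by
  ext j
  simp only [vertex, h, edgeCoord, triSeg, triVert, Pi.add_apply, Pi.smul_apply, smul_eq_mul]
  split_ifs <;> push_cast <;> ring

lemma simplicialMap_segment (i : Fin 17) (k k' : Fin 3) {s : ℝ} (hs : s ∈ Set.Icc (0 : ℝ) 1) :
    simplicialMap ((1 - s) • vertex (triangle i k) + s • vertex (triangle i k')) =
      (1 - s) • duncehatVertex (label (triangle i k)) +
        s • duncehatVertex (label (triangle i k')) := by
  have hc : (1 - s) • Pi.single k 1 + s • Pi.single k' 1 ∈ stdSimplex ℝ (Fin 3) :=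
    convex_stdSimplex ℝ _ (single_mem_stdSimplex ℝ k) (single_mem_stdSimplex ℝ k')
      (sub_nonneg.2 hs.2) hs.1 (sub_add_cancel 1 s)
  have hpt : (1 - s) • vertex (triangle i k) + s • vertex (triangle i k') =
      vertexMatrix i *ᵥ ((1 - s) • Pi.single k 1 + s • Pi.single k' 1) := by
    rw [mulVec_add, mulVec_smul, mulVec_smul, mulVec_single_one, mulVec_single_one]
    rfl
  rw [hpt, simplicialMap_vertexMatrix_mulVec i hc]
  simp [add_smul, Finset.sum_add_distrib, Pi.single_apply, ite_smul]

lemma simplicialMap_triSeg {a b : Fin 3} (hab : a < b) (m : Fin 3) {t : ℝ}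
    (ht : (m : ℝ) ≤ 3 * t) (ht' : 3 * t ≤ m + 1) :
    simplicialMap (triSeg a b t) =
      (m + 1 - 3 * t) • duncehatVertex (boundaryLabel m.castSucc) +
        (3 * t - m) • duncehatVertex (boundaryLabel m.succ) := by
  obtain ⟨i, k, k', hv, hv', hl, hl'⟩ := exists_triangle_edge a b hab m
  have hs : 3 * t - m ∈ Set.Icc (0 : ℝ) 1 := ⟨by linarith, by linarith⟩
  have hseg : triSeg a b t =
      (1 - (3 * t - m)) • vertex (triangle i k) + (3 * t - m) • vertex (triangle i k') := by
    rw [vertex_eq_triSeg hv, vertex_eq_triSeg hv', smul_triSeg_add_smul_triSeg]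
    congr 1
    push_cast
    ring
  rw [hseg, simplicialMap_segment i k k' hs, hl, hl', sub_sub_eq_add_sub, add_comm 1 (m : ℝ)]

lemma exists_fin_three_le_three_mul {t : ℝ} (ht : t ∈ Set.Icc (0 : ℝ) 1) :
    ∃ m : Fin 3, (m : ℝ) ≤ 3 * t ∧ 3 * t ≤ m + 1 := by
  rcases le_total (3 * t) 1 with h | h
  · exact ⟨0, by norm_num; linarith [ht.1], by norm_num; linarith⟩
  rcases le_total (3 * t) 2 with h' | h'
  · exact ⟨1, by norm_num; linarith, by norm_num; linarith⟩
  · exact ⟨2, by norm_num; linarith, by norm_num; linarith [ht.2]⟩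

lemma simplicialMap_triSeg_eq {a b : Fin 3} (hab : a < b) {t : ℝ}
    (ht : t ∈ Set.Icc (0 : ℝ) 1) : simplicialMap (triSeg a b t) = simplicialMap (triSeg 0 1 t) := by
  obtain ⟨m, hm, hm'⟩ := exists_fin_three_le_three_mul ht
  rw [simplicialMap_triSeg hab m hm hm', simplicialMap_triSeg (by decide) m hm hm']

lemma simplicialMap_eq_of_dunceRel {x y : stdSimplex ℝ (Fin 3)} (h : dunceRel x y) :
    simplicialMap x = simplicialMap y := by
  obtain ⟨t, ht, ⟨hx, hy⟩ | ⟨hx, hy⟩⟩ := h <;>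
    rw [hx, hy] <;> exact (simplicialMap_triSeg_eq (by decide) ht).symm

lemma edgePoint_eq_of_simplicialMap_triSeg_eq {t t' : unitInterval}
    (h : simplicialMap (triSeg 0 1 t) = simplicialMap (triSeg 0 1 t')) :
    DunceHat.edgePoint t = DunceHat.edgePoint t' := by
  suffices (t : ℝ) = t' ∨ ((t : ℝ) = 0 ∧ (t' : ℝ) = 1) ∨ ((t : ℝ) = 1 ∧ (t' : ℝ) = 0) by
    rcases this with h | ⟨h0, h1⟩ | ⟨h1, h0⟩
    · rw [show t = t' from Subtype.ext h]
    · rw [show t = 0 from Subtype.ext h0, show t' = 1 from Subtype.ext h1]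
      exact DunceHat.edgePoint_zero_eq_one
    · rw [show t = 1 from Subtype.ext h1, show t' = 0 from Subtype.ext h0]
      exact DunceHat.edgePoint_zero_eq_one.symm
  obtain ⟨m, hm, hm'⟩ := exists_fin_three_le_three_mul t.2
  obtain ⟨n, hn, hn'⟩ := exists_fin_three_le_three_mul t'.2
  rw [simplicialMap_triSeg (by decide) m hm hm', simplicialMap_triSeg (by decide) n hn hn'] at h
  have h1 := congrFun h 1
  have h2 := congrFun h 2
  have h3 := congrFun h 3
  fin_cases m <;> fin_cases n <;>
    simp [boundaryLabel, duncehatVertex] at h1 h2 h3 hm hm' hn hn' <;>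
    first
    | left; linarith
    | right; left; constructor <;> linarith
    | right; right; constructor <;> linarith

def dunceHatMap : DunceHat → Fin 9 → ℝ :=
  Quot.lift (fun x => simplicialMap x) fun _ _ => simplicialMap_eq_of_dunceRel

lemma continuous_dunceHatMap : Continuous dunceHatMap :=
  continuous_quot_lift _ (continuous_simplicialMap.comp continuous_subtype_val)

lemma range_dunceHatMap {K : SimplicialComplex ℝ (Fin 9 → ℝ)}
    (hK : K.faces = {s : Finset (Fin 9 → ℝ) | s.Nonempty ∧ ∃ T ∈ duncehatTriangles,
      ↑s ⊆ duncehatVertex '' (T : Set ℕ)}) :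
    Set.range dunceHatMap = K.space := by
  have hrange : Set.range dunceHatMap =
      Set.range fun x : stdSimplex ℝ (Fin 3) => simplicialMap x :=
    Set.range_quot_lift _
  rw [hrange, space_eq_iUnion hK, ← image_simplicialMap, Set.image_eq_range]
  rfl

lemma injective_dunceHatMap : Function.Injective dunceHatMap := by
  intro q q' h
  induction q using Quot.ind with | mk x => ?_
  induction q' using Quot.ind with | mk y => ?_
  obtain ⟨x, hx⟩ := x
  obtain ⟨y, hy⟩ := y
  change simplicialMap x = simplicialMap y at h
  by_cases hint : ∃ v, 4 ≤ label v ∧ hat v x ≠ 0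
  · obtain ⟨v, hv, hxv⟩ := hint
    exact congrArg _ (Subtype.ext (eq_of_simplicialMap_eq_of_hat_ne_zero hx hy h hv hxv))
  simp only [not_exists, not_and, not_not] at hint
  obtain ⟨c, hc⟩ := exists_apply_eq_zero_of_hat_eq_zero hx hint
  obtain ⟨c', hc'⟩ := exists_apply_eq_zero_of_hat_eq_zero hy fun v hv => by
    rw [← simplicialMap_apply_label hv, ← h, simplicialMap_apply_label hv, hint v hv]
  obtain ⟨t, ht⟩ := DunceHat.exists_edgePoint_eq hx hc
  obtain ⟨t', ht'⟩ := DunceHat.exists_edgePoint_eq hy hc'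
  rw [ht, ht']
  exact edgePoint_eq_of_simplicialMap_triSeg_eq
    ((congrArg dunceHatMap ht).symm.trans (h.trans (congrArg dunceHatMap ht')))

end DunceTriangulation

end

instance : DecidablePred GaleEven := fun S => by unfold GaleEven; infer_instance

lemma exists_galeEven_superset_iff {T : Finset ℕ} (hT : T ∈ (Icc 1 8).powersetCard 3) :
    (∃ S ∈ (Icc 1 8).powersetCard 5, T ⊆ S ∧ GaleEven S) ↔
      1 ∈ T ∨ 8 ∈ T ∨ ∃ j ∈ T, j + 1 ∈ T := by
  revert T
  decide +kernel

lemma duncehatTriangles_subset_powersetCard : duncehatTriangles ⊆ (Icc 1 8).powersetCard 3 := by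
  decide +kernel

lemma one_mem_or_eight_mem_or_exists_succ_mem_of_mem_duncehatTriangles :
    ∀ T ∈ duncehatTriangles, 1 ∈ T ∨ 8 ∈ T ∨ ∃ j ∈ T, j + 1 ∈ T := by
  decide +kernel

/-- **An 8-vertex dunce hat inside the cyclic polytope `C₅(8)`.** The simplicial
complex generated by the 17 listed triangles on the vertex set `{1,…,8}` is a
triangulation of the dunce hat; every triangle contains vertex 1, or vertex 8, or two
consecutive labels; consequently, by Gale's evenness condition, every triangle extends
to a facet of the cyclic 5-polytope `C₅(8)`, i.e. the complex embeds as a subcomplex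
of the boundary complex of `C₅(8)`. -/
theorem eight_vertex_dunce_hat_in_cyclic_polytope :
    (∀ K : SimplicialComplex ℝ (Fin 9 → ℝ),
      K.faces = {s : Finset (Fin 9 → ℝ) | s.Nonempty ∧ ∃ T ∈ duncehatTriangles,
        ↑s ⊆ duncehatVertex '' (T : Set ℕ)} →
      Nonempty (↥K.space ≃ₜ DunceHat)) ∧
    (∀ T ∈ duncehatTriangles, 1 ∈ T ∨ 8 ∈ T ∨ ∃ j, j ∈ T ∧ j + 1 ∈ T) ∧
    (∀ T ∈ duncehatTriangles, ∃ S : Finset ℕ,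
      T ⊆ S ∧ S ⊆ Finset.Icc 1 8 ∧ S.card = 5 ∧ GaleEven S) := by
  refine ⟨fun K hK => ?_, one_mem_or_eight_mem_or_exists_succ_mem_of_mem_duncehatTriangles,
    fun T hT => ?_⟩
  · open DunceTriangulation in
    let e : DunceHat ≃ Set.range dunceHatMap := Equiv.ofInjective _ injective_dunceHatMap
    have he : Continuous e := continuous_dunceHatMap.subtype_mk _
    exact ⟨(he.homeoOfEquivCompactToT2.trans (Homeomorph.setCongr (range_dunceHatMap hK))).symm⟩
  · obtain ⟨S, hS, hTS, hS_gale⟩ := (exists_galeEven_superset_iff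
      (duncehatTriangles_subset_powersetCard hT)).2
      (one_mem_or_eight_mem_or_exists_succ_mem_of_mem_duncehatTriangles T hT)
    rw [mem_powersetCard] at hS
    exact ⟨S, hTS, hS.1, hS.2, hS_gale⟩
end
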